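/- arXiv:1910.00830 — 4 statements merged into one kernel-verified Lean document; each statement's English description precedes it below -/
import Mathlib

section
/- Suppose v : ℕ → ℝ satisfies |v(k)| ≤ C/k² for k ≥ 1. Define, for 1 ≤ k < N, the basis function c_k(t) = v(k)cos(kt) + Σ_{m=1}^∞ [v(mN+k)cos((mN+k)t) + v(mN−k)cos((mN−k)t)] and the factor hc(k) = v(k) + Σ_{m=1}^∞ [v(mN+k) + v(mN−k)]. Then at every node t_j = 2π(j−1)/N of the grid Δ_N^{(0)}, c_k(t_j) = hc(k)·cos(k·t_j). -/
open Real

theorem basis_cos_interpolation_grid00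
    (v : ℕ → ℝ) (C : ℝ) (hv : ∀ k : ℕ, 1 ≤ k → |v k| ≤ C / (k : ℝ) ^ 2)
    (N : ℕ) (hN : 3 ≤ N) (k : ℕ) (hk : 1 ≤ k) (hkN : k < N)
    (j : ℤ) :
    (fun t : ℝ => v k * Real.cos (k * t) +
        ∑' m : ℕ,
          (v ((m + 1) * N + k) * Real.cos ((((m + 1) * N + k : ℕ) : ℝ) * t) +
           v ((m + 1) * N - k) * Real.cos ((((m + 1) * N - k : ℕ) : ℝ) * t)))
      (2 * π * ((j : ℝ) - 1) / N) =
    (v k + ∑' m : ℕ, (v ((m + 1) * N + k) + v ((m + 1) * N - k))) *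
      Real.cos (k * (2 * π * ((j : ℝ) - 1) / N)) := by
  simp only
  set t : ℝ := 2 * π * ((j : ℝ) - 1) / N with ht
  have hN0 : (N : ℝ) ≠ 0 := by
    have : 0 < N := by omega
    positivity
  have hmul : ∀ m : ℕ, ((m : ℝ) + 1) * (N : ℝ) * t = ((m + 1 : ℤ) * (j - 1) : ℤ) * (2 * π) := by
    intro m
    rw [ht]
    push_cast
    field_simp
  have hkle : ∀ m : ℕ, k ≤ (m + 1) * N := fun m =>
    le_trans hkN.le (Nat.le_mul_of_pos_left N (by omega))
  have hplus : ∀ m : ℕ, Real.cos ((((m + 1) * N + k : ℕ) : ℝ) * t) = Real.cos ((k : ℝ) * t) := by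
    intro m
    push_cast
    rw [add_mul, add_comm, hmul m, Real.cos_add_int_mul_two_pi]
  have hminus : ∀ m : ℕ, Real.cos ((((m + 1) * N - k : ℕ) : ℝ) * t) = Real.cos ((k : ℝ) * t) := by
    intro m
    rw [Nat.cast_sub (hkle m)]
    push_cast
    rw [sub_mul, sub_eq_add_neg, add_comm, hmul m, Real.cos_add_int_mul_two_pi,
      ← Real.cos_neg, neg_neg]
  have : ∑' m : ℕ,
      (v ((m + 1) * N + k) * Real.cos ((((m + 1) * N + k : ℕ) : ℝ) * t) +
       v ((m + 1) * N - k) * Real.cos ((((m + 1) * N - k : ℕ) : ℝ) * t)) =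
      (∑' m : ℕ, (v ((m + 1) * N + k) + v ((m + 1) * N - k))) * Real.cos ((k : ℝ) * t) := by
    rw [← tsum_mul_right]
    congr 1
    funext m
    rw [hplus m, hminus m]
    ring
  rw [this]
  ring
end

section
/- Suppose v : ℕ → ℝ satisfies |v(k)| ≤ C/k² for k ≥ 1. Define c_k^{(1)}(t) = v(k)cos(kt) + Σ_{m=1}^∞ (−1)^m [v(mN+k)cos((mN+k)t) + v(mN−k)cos((mN−k)t)] and hc^{(1,1)}(k) = v(k) + Σ_{m=1}^∞ [v(mN+k) + v(mN−k)]. Then at every shifted grid node t_j = π(2j−1)/N, c_k^{(1)}(t_j) = hc^{(1,1)}(k)·cos(k·t_j). -/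
open Real

theorem basis_cos_interpolation_grid11
    (v : ℕ → ℝ) (C : ℝ) (hv : ∀ k : ℕ, 1 ≤ k → |v k| ≤ C / (k : ℝ) ^ 2)
    (N : ℕ) (hN : 3 ≤ N) (k : ℕ) (hk : 1 ≤ k) (hkN : k < N)
    (j : ℤ) :
    (fun t : ℝ => v k * Real.cos (k * t) +
        ∑' m : ℕ, (-1 : ℝ) ^ (m + 1) *
          (v ((m + 1) * N + k) * Real.cos ((((m + 1) * N + k : ℕ) : ℝ) * t) +
           v ((m + 1) * N - k) * Real.cos ((((m + 1) * N - k : ℕ) : ℝ) * t)))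
      (π * (2 * (j : ℝ) - 1) / N) =
    (v k + ∑' m : ℕ, (v ((m + 1) * N + k) + v ((m + 1) * N - k))) *
      Real.cos (k * (π * (2 * (j : ℝ) - 1) / N)) := by
  have hN0 : (N : ℝ) ≠ 0 := by positivity
  set t : ℝ := π * (2 * (j : ℝ) - 1) / N with ht
  simp only
  have key : ∀ m : ℕ,
      (-1 : ℝ) ^ (m + 1) *
        (v ((m + 1) * N + k) * Real.cos ((((m + 1) * N + k : ℕ) : ℝ) * t) +
         v ((m + 1) * N - k) * Real.cos ((((m + 1) * N - k : ℕ) : ℝ) * t)) =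
      (v ((m + 1) * N + k) + v ((m + 1) * N - k)) * Real.cos (k * t) := by
    intro m
    have hkle : k ≤ (m + 1) * N := le_trans hkN.le (Nat.le_mul_of_pos_left N m.succ_pos)
    have e : ℤ := 0
    have hsign : ((-1 : ℝ) ^ ((((m : ℤ) + 1) * (2 * j - 1))) : ℝ) = (-1 : ℝ) ^ (m + 1) := by
      rcases Nat.even_or_odd (m + 1) with hpar | hpar
      · have h1 : Even (((m : ℤ) + 1) * (2 * j - 1)) := by
          refine (Int.even_mul).2 (Or.inl ?_)
          exact_mod_cast hpar
        rw [h1.neg_one_zpow, hpar.neg_one_pow]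
      · have h1 : Odd (((m : ℤ) + 1) * (2 * j - 1)) := by
          refine Int.odd_mul.2 ⟨by exact_mod_cast hpar, ⟨j - 1, by ring⟩⟩
        rw [h1.neg_one_zpow, hpar.neg_one_pow]
    have hplus : ((((m + 1) * N + k : ℕ) : ℝ) * t)
        = (k : ℝ) * t + (((((m : ℤ) + 1) * (2 * j - 1)) : ℤ) : ℝ) * π := by
      push_cast [ht]
      field_simp
      ring
    have hminus : ((((m + 1) * N - k : ℕ) : ℝ) * t)
        = (((((m : ℤ) + 1) * (2 * j - 1)) : ℤ) : ℝ) * π - (k : ℝ) * t := by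
      push_cast [Nat.cast_sub hkle, ht]
      field_simp
    rw [hplus, hminus, Real.cos_add_int_mul_pi, Real.cos_int_mul_pi_sub, hsign]
    have : ((-1 : ℝ) ^ (m + 1)) * ((-1 : ℝ) ^ (m + 1)) = 1 := by
      rw [← pow_add]; exact Even.neg_one_pow ⟨m + 1, by ring⟩
    linear_combination ((v ((m + 1) * N + k) + v ((m + 1) * N - k)) * Real.cos (k * t)) * this
  rw [tsum_congr key, tsum_mul_right]
  ring
end

section
/- Suppose v : ℕ → ℝ satisfies |v(k)| ≤ C/k² for k ≥ 1. Define c_k^{(0)}(t) = v(k)cos(kt) + Σ_{m=1}^∞ [v(mN+k)cos((mN+k)t) + v(mN−k)cos((mN−k)t)] and hc^{(0,1)}(k) = v(k) + Σ_{m=1}^∞ (−1)^m [v(mN+k) + v(mN−k)]. Then at every shifted node t_j = π(2j−1)/N, c_k^{(0)}(t_j) = hc^{(0,1)}(k)·cos(k·t_j). -/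
open Real

/-!
At the shifted node `t = π (2j - 1) / N` the frequency shift by `N` advances the phase by an odd
multiple of `π`, so `x ↦ cos (x t)` is `N`-antiperiodic. Hence `cos ((mN ± k) t) = (-1)^m cos (k t)`,
and the series for `c_k^{(0)}(t)` collapses termwise onto `hc^{(0,1)}(k) cos (k t)`.
-/

lemma antiperiodic_cos_mul_shifted_node {N : ℝ} (hN : N ≠ 0) (j : ℤ) :
    Function.Antiperiodic (fun x : ℝ => cos (x * (π * (2 * j - 1) / N))) N := by
  intro x
  have hphase : N * (π * (2 * j - 1) / N) = ((j - 1 : ℤ) : ℝ) * (2 * π) + π := by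
    push_cast
    field_simp
    ring
  simp only [add_mul, hphase]
  exact cos_antiperiodic.int_odd_mul_antiperiodic (j - 1) _

lemma cos_add_mul_shifted_node {N : ℕ} (hN : N ≠ 0) (j : ℤ) (p k : ℕ) :
    cos (((p * N + k : ℕ) : ℝ) * (π * (2 * j - 1) / N)) =
      (-1) ^ p * cos (k * (π * (2 * j - 1) / N)) := by
  have h := (antiperiodic_cos_mul_shifted_node (Nat.cast_ne_zero.mpr hN) j).add_nat_mul_eq
    (x := (k : ℝ)) p
  push_cast
  rwa [add_comm]

lemma cos_sub_mul_shifted_node {N : ℕ} (hN : N ≠ 0) (j : ℤ) {p k : ℕ} (hk : k ≤ p * N) :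
    cos (((p * N - k : ℕ) : ℝ) * (π * (2 * j - 1) / N)) =
      (-1) ^ p * cos (k * (π * (2 * j - 1) / N)) := by
  have h := (antiperiodic_cos_mul_shifted_node (Nat.cast_ne_zero.mpr hN) j).nat_mul_sub_eq
    (x := (k : ℝ)) p
  simp only [neg_mul, cos_neg] at h
  push_cast [Nat.cast_sub hk]
  exact h

theorem basis_cos_interpolation_grid01_general
    (v : ℕ → ℝ)
    (N : ℕ) (k : ℕ) (hkN : k < N)
    (j : ℤ) :
    (fun t : ℝ => v k * Real.cos (k * t) +
        ∑' m : ℕ,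
          (v ((m + 1) * N + k) * Real.cos ((((m + 1) * N + k : ℕ) : ℝ) * t) +
           v ((m + 1) * N - k) * Real.cos ((((m + 1) * N - k : ℕ) : ℝ) * t)))
      (π * (2 * (j : ℝ) - 1) / N) =
    (v k + ∑' m : ℕ, (-1 : ℝ) ^ (m + 1) * (v ((m + 1) * N + k) + v ((m + 1) * N - k))) *
      Real.cos (k * (π * (2 * (j : ℝ) - 1) / N)) := by
  have hN : N ≠ 0 := by omega
  beta_reduce
  rw [add_mul, ← tsum_mul_right]
  congr 1
  refine tsum_congr fun m => ?_
  have hk : k ≤ (m + 1) * N := hkN.le.trans (Nat.le_mul_of_pos_left N m.succ_pos)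
  rw [cos_add_mul_shifted_node hN, cos_sub_mul_shifted_node hN j hk]
  ring

theorem basis_cos_interpolation_grid01
    (v : ℕ → ℝ) (C : ℝ) (hv : ∀ k : ℕ, 1 ≤ k → |v k| ≤ C / (k : ℝ) ^ 2)
    (N : ℕ) (hN : 3 ≤ N) (k : ℕ) (hk : 1 ≤ k) (hkN : k < N)
    (j : ℤ) :
    (fun t : ℝ => v k * Real.cos (k * t) +
        ∑' m : ℕ,
          (v ((m + 1) * N + k) * Real.cos ((((m + 1) * N + k : ℕ) : ℝ) * t) +
           v ((m + 1) * N - k) * Real.cos ((((m + 1) * N - k : ℕ) : ℝ) * t)))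
      (π * (2 * (j : ℝ) - 1) / N) =
    (v k + ∑' m : ℕ, (-1 : ℝ) ^ (m + 1) * (v ((m + 1) * N + k) + v ((m + 1) * N - k))) *
      Real.cos (k * (π * (2 * (j : ℝ) - 1) / N)) :=
  basis_cos_interpolation_grid01_general v N k hkN j
end

section
/- Let N = 2n+1, v : ℕ → ℝ with |v(k)| ≤ C/k² and v(k) > 0, hc(k) = v(k) + Σ_{m=1}^∞ [v(mN+k) + v(mN−k)] ≠ 0 and hs(k) = hc(k) for 1 ≤ k ≤ n. With interpolation data f_1,…,f_N at t_j = 2π(j−1)/N and coefficients a_k, b_k as in the discrete Fourier formulas, the spline St(t) = a_0/2 + Σ_{k=1}^n [a_k c_k(t)/hc(k) + b_k s_k(t)/hs(k)] satisfies St(t_j) = f_j for all j, where c_k, s_k are the basis functions with all plus signs. -/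
/-! At a node `t_j` we have `N t_j ∈ 2πℤ`, so each frequency `mN ± k` occurring in `c_k`, `s_k`
aliases to `±k` there: termwise, `c_k(t_j) = hc(k) cos(k t_j)` and `s_k(t_j) = hc(k) sin(k t_j)`,
and the common factor comes out of the `tsum`. Dividing by `hc(k)` leaves the classical
trigonometric interpolant, which interpolates by the discrete orthogonality relation
`1 + 2 ∑_{k=1}^n cos(k(t_l - t_j)) = N δ_{lj}`, a geometric sum of `N`-th roots of unity. -/

open Real Finset

theorem sum_range_cos_nat_mul_eq_zero {N : ℕ} {θ : ℝ} {d : ℤ} (hN : N * θ = d * (2 * π))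
    (hθ : ∀ m : ℤ, θ ≠ m * (2 * π)) : ∑ k ∈ range N, cos (k * θ) = 0 := by
  set x : ℂ := Complex.exp (θ * Complex.I)
  have hx_pow : ∀ k : ℕ, x ^ k = Complex.exp ((k * θ : ℝ) * Complex.I) := fun k => by
    rw [← Complex.exp_nat_mul]; push_cast; ring_nf
  have hx_ne_one : x ≠ 1 := by
    rw [Ne, Complex.exp_eq_one_iff]
    rintro ⟨m, hm⟩
    refine hθ m (Complex.ofReal_injective ?_)
    push_cast
    exact mul_right_cancel₀ Complex.I_ne_zero (by rw [hm]; ring)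
  have hx_pow_N : x ^ N = 1 := by
    rw [hx_pow, hN]; push_cast
    rw [mul_assoc]; exact Complex.exp_int_mul_two_pi_mul_I d
  calc ∑ k ∈ range N, cos (k * θ) = (∑ k ∈ range N, x ^ k).re := by
        simp only [Complex.re_sum, hx_pow, Complex.exp_ofReal_mul_I_re]
    _ = 0 := by rw [geom_sum_eq hx_ne_one, hx_pow_N, sub_self, zero_div, Complex.zero_re]

theorem sum_range_cos_nat_mul_eq_one_add_two_mul_sum {n : ℕ} {θ : ℝ} {d : ℤ}
    (h : ((2 * n + 1 : ℕ) : ℝ) * θ = d * (2 * π)) :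
    ∑ k ∈ range (2 * n + 1), cos (k * θ) = 1 + 2 * ∑ k ∈ Icc 1 n, cos (k * θ) := by
  have hreflect :
      ∀ k < n, cos (((n + 1 + k : ℕ) : ℝ) * θ) = cos (((n - 1 - k + 1 : ℕ) : ℝ) * θ) := by
    intro k hk
    have : ((n + 1 + k : ℕ) : ℝ) * θ = d * (2 * π) - ((n - 1 - k + 1 : ℕ) : ℝ) * θ := by
      rw [← h, show n - 1 - k + 1 = n - k by omega, Nat.cast_sub hk.le]; push_cast; ring
    rw [this, cos_int_mul_two_pi_sub]
  rw [show 2 * n + 1 = (n + 1) + n by ring, sum_range_add, sum_range_succ',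
    sum_congr rfl fun k hk => hreflect k (mem_range.mp hk),
    sum_range_reflect (fun k => cos (((k + 1 : ℕ) : ℝ) * θ)) n,
    ← Ico_add_one_right_eq_Icc, sum_Ico_eq_sum_range]
  simp only [Nat.cast_zero, zero_mul, cos_zero, add_tsub_cancel_right, add_comm 1]
  ring

noncomputable section

-- `gridNode N j`, `dftCos N f k`, `dftSin N f k` are the paper's `t_j`, `a_k`, `b_k`.
def gridNode (N j : ℕ) : ℝ := 2 * π * ((j : ℝ) - 1) / N

theorem natCast_mul_gridNode {N : ℕ} (hN : N ≠ 0) (j : ℕ) :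
    N * gridNode N j = ((j : ℤ) - 1 : ℤ) * (2 * π) := by
  rw [gridNode]; push_cast; field_simp

theorem one_add_two_mul_sum_cos_gridNode (n : ℕ) {l j : ℕ} (hl : l ∈ Icc 1 (2 * n + 1))
    (hj : j ∈ Icc 1 (2 * n + 1)) :
    1 + 2 * ∑ k ∈ Icc 1 n, cos (k * (gridNode (2 * n + 1) l - gridNode (2 * n + 1) j)) =
      if l = j then ((2 * n + 1 : ℕ) : ℝ) else 0 := by
  rw [mem_Icc] at hl hj
  have hN : 2 * n + 1 ≠ 0 := by omega
  set θ := gridNode (2 * n + 1) l - gridNode (2 * n + 1) j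
  have hθ : ((2 * n + 1 : ℕ) : ℝ) * θ = ((l : ℤ) - j : ℤ) * (2 * π) := by
    rw [mul_sub, natCast_mul_gridNode hN, natCast_mul_gridNode hN]
    push_cast; ring
  rw [← sum_range_cos_nat_mul_eq_one_add_two_mul_sum hθ]
  split_ifs with hlj
  · simp [θ, hlj]
  refine sum_range_cos_nat_mul_eq_zero hθ fun m hm => hlj ?_
  have hdiff : (l : ℤ) - j = (2 * n + 1 : ℕ) * m := by
    rw [hm, ← mul_assoc] at hθ
    exact_mod_cast (mul_right_cancel₀ (by positivity) hθ).symm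
  have hlj' := Int.eq_zero_of_abs_lt_dvd ⟨m, hdiff⟩
    (by rw [abs_lt]; constructor <;> push_cast <;> omega)
  omega

def dftCos (N : ℕ) (f : ℕ → ℝ) (k : ℕ) : ℝ :=
  (2 / (N : ℝ)) * ∑ j ∈ Icc 1 N, f j * cos (k * gridNode N j)

def dftSin (N : ℕ) (f : ℕ → ℝ) (k : ℕ) : ℝ :=
  (2 / (N : ℝ)) * ∑ j ∈ Icc 1 N, f j * sin (k * gridNode N j)

theorem dftCos_mul_cos_add_dftSin_mul_sin (N : ℕ) (f : ℕ → ℝ) (k : ℕ) (x : ℝ) :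
    dftCos N f k * cos (k * x) + dftSin N f k * sin (k * x) =
      (2 / (N : ℝ)) * ∑ j ∈ Icc 1 N, f j * cos (k * (gridNode N j - x)) := by
  rw [dftCos, dftSin, mul_assoc, mul_assoc, ← mul_add, sum_mul, sum_mul, ← sum_add_distrib]
  congr 1
  refine sum_congr rfl fun j _ => ?_
  rw [mul_sub, cos_sub]
  ring

theorem dft_interpolation_gridNode (n : ℕ) (f : ℕ → ℝ) {j : ℕ} (hj : j ∈ Icc 1 (2 * n + 1)) :
    dftCos (2 * n + 1) f 0 / 2 + ∑ k ∈ Icc 1 n,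
      (dftCos (2 * n + 1) f k * cos (k * gridNode (2 * n + 1) j) +
        dftSin (2 * n + 1) f k * sin (k * gridNode (2 * n + 1) j)) = f j := by
  set N := 2 * n + 1
  have hN : (N : ℝ) ≠ 0 := by positivity
  calc _ = (1 / N) * ∑ l ∈ Icc 1 N,
          f l * (1 + 2 * ∑ k ∈ Icc 1 n, cos (k * (gridNode N l - gridNode N j))) := by
        have hexpand : ∀ l,
            f l * (1 + 2 * ∑ k ∈ Icc 1 n, cos (k * (gridNode N l - gridNode N j))) =
              f l + 2 * ∑ k ∈ Icc 1 n, f l * cos (k * (gridNode N l - gridNode N j)) :=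
          fun l => by rw [mul_add, mul_one, mul_left_comm, mul_sum]
        rw [sum_congr rfl fun k _ => dftCos_mul_cos_add_dftSin_mul_sin N f k _, ← mul_sum,
          sum_comm, sum_congr rfl fun l _ => hexpand l, sum_add_distrib, ← mul_sum _ _ (2 : ℝ)]
        simp only [dftCos, Nat.cast_zero, zero_mul, cos_zero, mul_one]
        ring
    _ = (1 / N) * ∑ l ∈ Icc 1 N, f l * if l = j then (N : ℝ) else 0 := by
        congr 1
        exact sum_congr rfl fun l hl => by rw [one_add_two_mul_sum_cos_gridNode n hl hj]
    _ = f j := by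
        simp only [mul_ite, mul_zero, sum_ite_eq', hj, if_true]
        field_simp

section Aliasing

variable {M : ℕ} {x : ℝ} {F : ℤ}

theorem cos_natCast_add_mul (h : M * x = F * (2 * π)) (k : ℕ) :
    cos (((M + k : ℕ) : ℝ) * x) = cos (k * x) := by
  rw [Nat.cast_add, add_mul, h, add_comm, cos_add_int_mul_two_pi]

theorem sin_natCast_add_mul (h : M * x = F * (2 * π)) (k : ℕ) :
    sin (((M + k : ℕ) : ℝ) * x) = sin (k * x) := by
  rw [Nat.cast_add, add_mul, h, add_comm, sin_add_int_mul_two_pi]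

theorem cos_natCast_sub_mul (h : M * x = F * (2 * π)) {k : ℕ} (hk : k ≤ M) :
    cos (((M - k : ℕ) : ℝ) * x) = cos (k * x) := by
  rw [Nat.cast_sub hk, sub_mul, h, cos_int_mul_two_pi_sub]

theorem sin_natCast_sub_mul (h : M * x = F * (2 * π)) {k : ℕ} (hk : k ≤ M) :
    sin (((M - k : ℕ) : ℝ) * x) = -sin (k * x) := by
  rw [Nat.cast_sub hk, sub_mul, h, sin_int_mul_two_pi_sub]

end Aliasing

-- `aliasWeight v N k`, `aliasedCos v N k`, `aliasedSin v N k` are the paper's `hc(k)`, `c_k`,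
-- `s_k`.
def aliasWeight (v : ℕ → ℝ) (N k : ℕ) : ℝ :=
  v k + ∑' m : ℕ, (v ((m + 1) * N + k) + v ((m + 1) * N - k))

def aliasedCos (v : ℕ → ℝ) (N k : ℕ) (x : ℝ) : ℝ :=
  v k * cos (k * x) + ∑' m : ℕ,
    (v ((m + 1) * N + k) * cos ((((m + 1) * N + k : ℕ) : ℝ) * x) +
      v ((m + 1) * N - k) * cos ((((m + 1) * N - k : ℕ) : ℝ) * x))

def aliasedSin (v : ℕ → ℝ) (N k : ℕ) (x : ℝ) : ℝ :=
  v k * sin (k * x) + ∑' m : ℕ,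
    (v ((m + 1) * N + k) * sin ((((m + 1) * N + k : ℕ) : ℝ) * x) -
      v ((m + 1) * N - k) * sin ((((m + 1) * N - k : ℕ) : ℝ) * x))

theorem natCast_succ_mul_mul_eq {N : ℕ} {x : ℝ} {E : ℤ} (h : N * x = E * (2 * π))
    (m : ℕ) :
    (((m + 1) * N : ℕ) : ℝ) * x = ((m + 1) * E : ℤ) * (2 * π) := by
  push_cast
  linear_combination ((m : ℝ) + 1) * h

theorem aliasedCos_eq_cos_mul_aliasWeight (v : ℕ → ℝ) {N k : ℕ} (hk : k ≤ N) {x : ℝ} {E : ℤ}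
    (h : N * x = E * (2 * π)) : aliasedCos v N k x = cos (k * x) * aliasWeight v N k := by
  have hterm : ∀ m : ℕ,
      v ((m + 1) * N + k) * cos ((((m + 1) * N + k : ℕ) : ℝ) * x) +
        v ((m + 1) * N - k) * cos ((((m + 1) * N - k : ℕ) : ℝ) * x) =
      cos (k * x) * (v ((m + 1) * N + k) + v ((m + 1) * N - k)) := fun m => by
    have hM := natCast_succ_mul_mul_eq h m
    have hkM : k ≤ (m + 1) * N := hk.trans (Nat.le_mul_of_pos_left N m.succ_pos)
    rw [cos_natCast_add_mul hM, cos_natCast_sub_mul hM hkM]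
    ring
  rw [aliasedCos, aliasWeight, tsum_congr hterm, tsum_mul_left]
  ring

theorem aliasedSin_eq_sin_mul_aliasWeight (v : ℕ → ℝ) {N k : ℕ} (hk : k ≤ N) {x : ℝ} {E : ℤ}
    (h : N * x = E * (2 * π)) : aliasedSin v N k x = sin (k * x) * aliasWeight v N k := by
  have hterm : ∀ m : ℕ,
      v ((m + 1) * N + k) * sin ((((m + 1) * N + k : ℕ) : ℝ) * x) -
        v ((m + 1) * N - k) * sin ((((m + 1) * N - k : ℕ) : ℝ) * x) =
      sin (k * x) * (v ((m + 1) * N + k) + v ((m + 1) * N - k)) := fun m => by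
    have hM := natCast_succ_mul_mul_eq h m
    have hkM : k ≤ (m + 1) * N := hk.trans (Nat.le_mul_of_pos_left N m.succ_pos)
    rw [sin_natCast_add_mul hM, sin_natCast_sub_mul hM hkM]
    ring
  rw [aliasedSin, aliasWeight, tsum_congr hterm, tsum_mul_left]
  ring

end

theorem spline_interpolation_grid00_general
    (n : ℕ) (v : ℕ → ℝ) (f : ℕ → ℝ) :
    let N : ℕ := 2 * n + 1
    let t : ℕ → ℝ := fun j => 2 * π * ((j : ℝ) - 1) / N
    let a : ℕ → ℝ := fun k => (2 / (N : ℝ)) * ∑ j ∈ Finset.Icc 1 N, f j * Real.cos (k * t j)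
    let b : ℕ → ℝ := fun k => (2 / (N : ℝ)) * ∑ j ∈ Finset.Icc 1 N, f j * Real.sin (k * t j)
    let hc : ℕ → ℝ := fun k => v k + ∑' m : ℕ, (v ((m + 1) * N + k) + v ((m + 1) * N - k))
    let hs : ℕ → ℝ := hc
    let c : ℕ → ℝ → ℝ := fun k x => v k * Real.cos (k * x) +
      ∑' m : ℕ,
        (v ((m + 1) * N + k) * Real.cos ((((m + 1) * N + k : ℕ) : ℝ) * x) +
         v ((m + 1) * N - k) * Real.cos ((((m + 1) * N - k : ℕ) : ℝ) * x))
    let s : ℕ → ℝ → ℝ := fun k x => v k * Real.sin (k * x) +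
      ∑' m : ℕ,
        (v ((m + 1) * N + k) * Real.sin ((((m + 1) * N + k : ℕ) : ℝ) * x) -
         v ((m + 1) * N - k) * Real.sin ((((m + 1) * N - k : ℕ) : ℝ) * x))
    let St : ℝ → ℝ := fun x =>
      a 0 / 2 + ∑ k ∈ Finset.Icc 1 n, (a k * c k x / hc k + b k * s k x / hs k)
    (∀ k ∈ Finset.Icc 1 n, hc k ≠ 0) →
    ∀ j ∈ Finset.Icc 1 N, St (t j) = f j := by
  intro N t a b hc hs c s St hhc j hj
  have hNt : (N : ℝ) * t j = ((j : ℤ) - 1 : ℤ) * (2 * π) := natCast_mul_gridNode (by omega) j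
  have hcos : ∀ k ∈ Icc 1 n, c k (t j) = cos (k * t j) * hc k := fun k hk =>
    aliasedCos_eq_cos_mul_aliasWeight v (by grind) hNt
  have hsin : ∀ k ∈ Icc 1 n, s k (t j) = sin (k * t j) * hs k := fun k hk =>
    aliasedSin_eq_sin_mul_aliasWeight v (by grind) hNt
  calc St (t j) = a 0 / 2 + ∑ k ∈ Icc 1 n, (a k * cos (k * t j) + b k * sin (k * t j)) := by
        refine congrArg (a 0 / 2 + ·) (sum_congr rfl fun k hk => ?_)
        rw [hcos k hk, hsin k hk, ← mul_assoc, ← mul_assoc, mul_div_cancel_right₀ _ (hhc k hk),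
          mul_div_cancel_right₀ _ (hhc k hk)]
    _ = f j := dft_interpolation_gridNode n f hj

theorem spline_interpolation_grid00
    (n : ℕ) (hn : 1 ≤ n) (v : ℕ → ℝ) (C : ℝ)
    (hv : ∀ k : ℕ, 1 ≤ k → |v k| ≤ C / (k : ℝ) ^ 2)
    (hvpos : ∀ k : ℕ, 1 ≤ k → 0 < v k) (f : ℕ → ℝ) :
    let N : ℕ := 2 * n + 1
    let t : ℕ → ℝ := fun j => 2 * π * ((j : ℝ) - 1) / N
    let a : ℕ → ℝ := fun k => (2 / (N : ℝ)) * ∑ j ∈ Finset.Icc 1 N, f j * Real.cos (k * t j)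
    let b : ℕ → ℝ := fun k => (2 / (N : ℝ)) * ∑ j ∈ Finset.Icc 1 N, f j * Real.sin (k * t j)
    let hc : ℕ → ℝ := fun k => v k + ∑' m : ℕ, (v ((m + 1) * N + k) + v ((m + 1) * N - k))
    let hs : ℕ → ℝ := hc
    let c : ℕ → ℝ → ℝ := fun k x => v k * Real.cos (k * x) +
      ∑' m : ℕ,
        (v ((m + 1) * N + k) * Real.cos ((((m + 1) * N + k : ℕ) : ℝ) * x) +
         v ((m + 1) * N - k) * Real.cos ((((m + 1) * N - k : ℕ) : ℝ) * x))
    let s : ℕ → ℝ → ℝ := fun k x => v k * Real.sin (k * x) +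
      ∑' m : ℕ,
        (v ((m + 1) * N + k) * Real.sin ((((m + 1) * N + k : ℕ) : ℝ) * x) -
         v ((m + 1) * N - k) * Real.sin ((((m + 1) * N - k : ℕ) : ℝ) * x))
    let St : ℝ → ℝ := fun x =>
      a 0 / 2 + ∑ k ∈ Finset.Icc 1 n, (a k * c k x / hc k + b k * s k x / hs k)
    (∀ k ∈ Finset.Icc 1 n, hc k ≠ 0) →
    ∀ j ∈ Finset.Icc 1 N, St (t j) = f j :=
  spline_interpolation_grid00_general n v f
end
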